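/- Let P be a simple polytope, let {v,w} be an edge of its graph G(P), and let S₁, S₂ ⊆ N(v)\{w}. Then Ψ_{(v,w)}(S₁ ∩ S₂) = Ψ_{(v,w)}(S₁) ∩ Ψ_{(v,w)}(S₂). -/

import Mathlib

/-
The face `F_S` spanned by `v` and `insert w S` is also the face spanned by `w` and `insert v (Ψ S)`,
so `Ψ S` consists of the neighbours of `w` other than `v` that lie in `F_S`. It therefore suffices
to show `F_{S₁ ∩ S₂} = F_{S₁} ∩ F_{S₂}`, and both inclusions follow from one geometric fact: a face
`F` through a vertex `v` lies in a face `G` through `v` as soon as every neighbour of `v` in `F`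
lies in `G`. Indeed, if `G` is exposed by `f` and `F ⊄ G`, then `-f` is not maximal over `F` at
`v`, and the simplex-method lemma yields an edge of `F` at `v` along which `f` decreases, i.e. a
neighbour of `v` in `F` outside `G`. The simplex-method lemma is proved by induction on the number
of vertices: tilting a functional exposing `v` towards the objective exposes a proper face that
contains `v` and a better vertex, unless the polytope is a segment.
-/

open scoped Classical

abbrev EVec (n : ℕ) := Fin n → ℝ

def IsPolytope {n : ℕ} (P : Set (EVec n)) : Prop :=
  ∃ S : Finset (EVec n), P = convexHull ℝ (S : Set (EVec n))

noncomputable def sdim {n : ℕ} (F : Set (EVec n)) : ℕ :=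
  Module.finrank ℝ (affineSpan ℝ F).direction

def IsFace {n : ℕ} (P F : Set (EVec n)) : Prop :=
  IsExposed ℝ P F ∨ F = ∅ ∨ F = P

def IsKFace {n : ℕ} (P F : Set (EVec n)) (k : ℕ) : Prop :=
  IsFace P F ∧ F.Nonempty ∧ sdim F = k

def IsVertex {n : ℕ} (P : Set (EVec n)) (v : EVec n) : Prop :=
  IsKFace P {v} 0

def Adj {n : ℕ} (P : Set (EVec n)) (v w : EVec n) : Prop :=
  IsKFace P (convexHull ℝ {v, w}) 1

def Neighbors {n : ℕ} (P : Set (EVec n)) (v : EVec n) : Set (EVec n) :=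
  {w | Adj P v w}

def vertSet {n : ℕ} (P : Set (EVec n)) : Set (EVec n) := {v | IsVertex P v}

def vertFace {n : ℕ} (P F : Set (EVec n)) : Set (EVec n) := vertSet P ∩ F

def IsSimplePolytope {n : ℕ} (P : Set (EVec n)) (d : ℕ) : Prop :=
  IsPolytope P ∧ sdim P = d ∧
    ∀ v, IsVertex P v → {F : Set (EVec n) | IsKFace P F (d - 1) ∧ v ∈ F}.ncard = d

/- orientations -/

def IsOrientation {n : ℕ} (P : Set (EVec n)) (O : EVec n → EVec n → Prop) : Prop :=
  (∀ v w, O v w → Adj P v w) ∧ ∀ v w, Adj P v w → (O v w ↔ ¬ O w v)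

def IsAcyclic {n : ℕ} (O : EVec n → EVec n → Prop) : Prop :=
  ∀ v, ¬ Relation.TransGen O v v

def IsSinkOn {n : ℕ} (P : Set (EVec n)) (O : EVec n → EVec n → Prop)
    (W : Set (EVec n)) (w : EVec n) : Prop :=
  w ∈ W ∧ ∀ u ∈ W, Adj P w u → O u w

def IsSourceOn {n : ℕ} (P : Set (EVec n)) (O : EVec n → EVec n → Prop)
    (W : Set (EVec n)) (w : EVec n) : Prop :=
  w ∈ W ∧ ∀ u ∈ W, Adj P w u → O w u

def IsAOF {n : ℕ} (P : Set (EVec n)) (O : EVec n → EVec n → Prop) : Prop :=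
  IsOrientation P O ∧ IsAcyclic O ∧
    ∀ F, IsFace P F → F.Nonempty → ∃! w, IsSinkOn P O (vertFace P F) w

def IsTerminal {n : ℕ} (O : EVec n → EVec n → Prop) (W : Set (EVec n)) : Prop :=
  ∀ v ∈ W, ∀ u, u ∉ W → ¬ O v u

noncomputable def indeg {n : ℕ} (O : EVec n → EVec n → Prop) (v : EVec n) : ℕ :=
  {u | O u v}.ncard

noncomputable def hNum {n : ℕ} (P : Set (EVec n)) (O : EVec n → EVec n → Prop) (k : ℕ) : ℕ :=
  {v | IsVertex P v ∧ indeg O v = k}.ncard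

noncomputable def Hsum {n : ℕ} (P : Set (EVec n)) (d : ℕ) (O : EVec n → EVec n → Prop) : ℕ :=
  ∑ k ∈ Finset.range (d + 1), hNum P O k * 2 ^ k

noncomputable def H2sum {n : ℕ} (P : Set (EVec n)) (d : ℕ) (O : EVec n → EVec n → Prop) : ℕ :=
  ∑ k ∈ Finset.range (d + 1), hNum P O k * Nat.choose k 2

/- walks -/

structure CycSeq (α : Type*) where
  len : ℕ
  seq : ℤ → α

def CycSeq.Periodic {α : Type*} (C : CycSeq α) : Prop :=
  ∀ i : ℤ, C.seq (i + C.len) = C.seq i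

def CycSeq.Equiv {α : Type*} (C C' : CycSeq α) : Prop :=
  C.len = C'.len ∧ ∃ s ε : ℤ, (ε = 1 ∨ ε = -1) ∧ ∀ i : ℤ, C'.seq i = C.seq (ε * i + s)

def IsCSWalk {n : ℕ} (P : Set (EVec n)) (W : CycSeq (EVec n)) : Prop :=
  3 ≤ W.len ∧ W.Periodic ∧
    ∀ i : ℤ, Adj P (W.seq i) (W.seq (i + 1)) ∧ W.seq (i - 1) ≠ W.seq (i + 1)

def Passes {n : ℕ} (W : CycSeq (EVec n)) (i : ℤ) (v₁ v v₂ : EVec n) : Prop :=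
  W.seq i = v ∧
    ((W.seq (i - 1) = v₁ ∧ W.seq (i + 1) = v₂) ∨ (W.seq (i - 1) = v₂ ∧ W.seq (i + 1) = v₁))

def IsFacoidal {n : ℕ} (P : Set (EVec n)) (𝒲 : Set (CycSeq (EVec n))) : Prop :=
  (∀ W ∈ 𝒲, IsCSWalk P W) ∧
  (∀ W ∈ 𝒲, ∀ W', CycSeq.Equiv W W' → W' ∈ 𝒲) ∧
  ∀ v v₁ v₂ : EVec n, IsVertex P v → v₁ ≠ v₂ → Adj P v v₁ → Adj P v v₂ →
    (∃ W ∈ 𝒲, ∃ i : ℤ, Passes W i v₁ v v₂) ∧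
    (∀ W ∈ 𝒲, ∀ W' ∈ 𝒲, ∀ i i' : ℤ,
        Passes W i v₁ v v₂ → Passes W' i' v₁ v v₂ → CycSeq.Equiv W W') ∧
    (∀ W ∈ 𝒲, ∀ i i' : ℤ,
        Passes W i v₁ v v₂ → Passes W i' v₁ v v₂ → (W.len : ℤ) ∣ (i - i'))

def IsFaceWalk {n : ℕ} (P : Set (EVec n)) (W : CycSeq (EVec n)) (F : Set (EVec n)) : Prop :=
  IsCSWalk P W ∧ (∀ i j : ℤ, W.seq i = W.seq j → (W.len : ℤ) ∣ (i - j)) ∧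
    vertFace P F = Set.range W.seq

def twoFaceWalks {n : ℕ} (P : Set (EVec n)) : Set (CycSeq (EVec n)) :=
  {W | ∃ F, IsKFace P F 2 ∧ IsFaceWalk P W F}

noncomputable def numWalks {n : ℕ} (𝒲 : Set (CycSeq (EVec n))) : ℕ :=
  ((fun W => Quot.mk CycSeq.Equiv W) '' 𝒲).ncard

noncomputable def f₂ {n : ℕ} (P : Set (EVec n)) : ℕ := {F : Set (EVec n) | IsKFace P F 2}.ncard

def WalkSinkAt {n : ℕ} (O : EVec n → EVec n → Prop) (W : CycSeq (EVec n)) (i : ℤ) : Prop :=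
  O (W.seq (i - 1)) (W.seq i) ∧ O (W.seq (i + 1)) (W.seq i)

noncomputable def numWalkSinks {n : ℕ} (O : EVec n → EVec n → Prop)
    (W : CycSeq (EVec n)) : ℕ :=
  ((Finset.range W.len).filter (fun i => WalkSinkAt O W (i : ℤ))).card

/- the graph Λ(G(P)) -/

def P2nodes {n : ℕ} (P : Set (EVec n)) : Set (EVec n × Sym2 (EVec n)) :=
  {p | ∃ v₁ v₂ : EVec n, p.2 = s(v₁, v₂) ∧ v₁ ≠ v₂ ∧ Adj P p.1 v₁ ∧ Adj P p.1 v₂}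

def LambdaAdj {n : ℕ} (P : Set (EVec n)) (p q : EVec n × Sym2 (EVec n)) : Prop :=
  p ∈ P2nodes P ∧ q ∈ P2nodes P ∧ p.1 ≠ q.1 ∧
    ∃ x y, x ∈ p.2 ∧ y ∈ q.2 ∧ s(p.1, x) = s(q.1, y)

def IsCycleIn {α : Type*} (A : α → α → Prop) (C : CycSeq α) : Prop :=
  3 ≤ C.len ∧ C.Periodic ∧ (∀ i : ℤ, A (C.seq i) (C.seq (i + 1))) ∧
    ∀ i j : ℤ, C.seq i = C.seq j → (C.len : ℤ) ∣ (i - j)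

def IsTwoFactor {α : Type*} (Nd : Set α) (A : α → α → Prop) (𝒞 : Set (CycSeq α)) : Prop :=
  (∀ C ∈ 𝒞, IsCycleIn A C) ∧
  (∀ C ∈ 𝒞, ∀ C', CycSeq.Equiv C C' → C' ∈ 𝒞) ∧
  ∀ p ∈ Nd, (∃ C ∈ 𝒞, ∃ i : ℤ, C.seq i = p) ∧
    ∀ C ∈ 𝒞, ∀ C' ∈ 𝒞, (∃ i : ℤ, C.seq i = p) → (∃ i : ℤ, C'.seq i = p) → CycSeq.Equiv C C'

/- spanned faces -/

def Spans {n : ℕ} (P : Set (EVec n)) (v : EVec n) (S F : Set (EVec n)) : Prop :=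
  IsKFace P F S.ncard ∧ v ∈ F ∧ S ⊆ F ∧ ∀ u ∈ Neighbors P v \ S, u ∉ F

open Filter Topology

theorem exists_pos_forall_add_mul_lt {α : Type*} (V : Finset α) (ψ φ : α → ℝ) (M m : ℝ) :
    ∃ ε > 0, ∀ u ∈ V, ψ u < M → ψ u + ε * (φ u - m) < M := by
  have hev : ∀ u ∈ V, ∀ᶠ ε in 𝓝 (0 : ℝ), ψ u < M → ψ u + ε * (φ u - m) < M := by
    intro u _
    by_cases hu : ψ u < M
    · have hlim : Tendsto (fun ε : ℝ => ψ u + ε * (φ u - m)) (𝓝 0) (𝓝 (ψ u)) := by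
        simpa using ((continuous_id.mul continuous_const).const_add (ψ u)).tendsto 0
      filter_upwards [hlim.eventually (gt_mem_nhds hu)] with ε hε _ using hε
    · exact Eventually.of_forall fun _ h => absurd h hu
  obtain ⟨ε, hε, hpos⟩ := (((eventually_all_finset V).2 hev).filter_mono
    nhdsWithin_le_nhds |>.and (self_mem_nhdsWithin (s := Set.Ioi 0))).exists
  exact ⟨ε, hpos, hε⟩

theorem exists_pos_mul_add_le {α : Type*} (V : Finset α) (h g : α → ℝ) {v : α}
    (hh : ∀ y ∈ V, y ≠ v → h y < h v) (hg : ∃ x ∈ V, g v < g x) :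
    ∃ s > 0, ∃ u ∈ V, g v < g u ∧ s * h u + g u = s * h v + g v ∧
      ∀ y ∈ V, s * h y + g y ≤ s * h v + g v := by
  have hgap : ∀ y ∈ V, g v < g y → 0 < h v - h y := fun y hy hgy =>
    sub_pos.2 (hh y hy (fun hyv => hgy.ne' (hyv ▸ rfl)))
  obtain ⟨u, hu, hmax⟩ := (V.filter (g v < g ·)).exists_max_image
    (fun y => (g y - g v) / (h v - h y)) (by simpa [Finset.Nonempty] using hg)
  rw [Finset.mem_filter] at hu
  set s := (g u - g v) / (h v - h u) with hs
  have hs0 : 0 < s := div_pos (by linarith [hu.2]) (hgap u hu.1 hu.2)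
  refine ⟨s, hs0, u, hu.1, hu.2, ?_, fun y hy => ?_⟩
  · rw [hs]; field_simp [(hgap u hu.1 hu.2).ne']; ring
  by_cases hgy : g v < g y
  · have := hmax y (Finset.mem_filter.2 ⟨hy, hgy⟩)
    rw [div_le_iff₀ (hgap y hy hgy)] at this
    linarith
  · have hhy : h y ≤ h v := by
      rcases eq_or_ne y v with rfl | hyv
      · rfl
      · exact (hh y hy hyv).le
    nlinarith

section ConvexHull

variable {E : Type*} [AddCommGroup E] [Module ℝ E]
variable {F : Type*} [FunLike F E ℝ] [LinearMapClass F ℝ E ℝ]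

theorem apply_le_of_mem_convexHull {s : Set E} {l : F} {c : ℝ} (hl : ∀ u ∈ s, l u ≤ c)
    {x : E} (hx : x ∈ convexHull ℝ s) : l x ≤ c :=
  convexHull_min hl (convex_halfSpace_le ⟨map_add l, map_smul l⟩ c) hx

theorem apply_eq_of_mem_convexHull {s : Set E} {l : F} {c : ℝ} (hl : ∀ u ∈ s, l u = c)
    {x : E} (hx : x ∈ convexHull ℝ s) : l x = c :=
  convexHull_min hl (convex_hyperplane ⟨map_add l, map_smul l⟩ c) hx

theorem convexHull_filter_eq {V : Finset E} {l : F} {c : ℝ} (hl : ∀ u ∈ V, l u ≤ c) :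
    convexHull ℝ ↑(V.filter (l · = c)) = {x ∈ convexHull ℝ ↑V | l x = c} := by
  ext x
  constructor
  · intro hx
    exact ⟨convexHull_mono (Finset.coe_subset.2 (Finset.filter_subset _ V)) hx,
      apply_eq_of_mem_convexHull (fun u hu => (Finset.mem_filter.1 hu).2) hx⟩
  · rintro ⟨hx, hlx⟩
    obtain ⟨w, hw0, hw1, rfl⟩ := Finset.mem_convexHull'.1 hx
    -- the weights of the combination can only sit on the level set `l = c`
    have hsum : ∑ u ∈ V, w u * (c - l u) = 0 := by
      have hlsum : l (∑ u ∈ V, w u • u) = ∑ u ∈ V, w u * l u := by simp [map_sum, map_smul]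
      calc ∑ u ∈ V, w u * (c - l u) = c * ∑ u ∈ V, w u - ∑ u ∈ V, w u * l u := by
            rw [Finset.mul_sum, ← Finset.sum_sub_distrib]
            exact Finset.sum_congr rfl fun u _ => by ring
        _ = 0 := by rw [hw1, ← hlsum, hlx]; ring
    have hzero : ∀ u ∈ V, w u ≠ 0 → l u = c := by
      intro u hu hwu
      have := (Finset.sum_eq_zero_iff_of_nonneg fun y hy =>
        mul_nonneg (hw0 y hy) (sub_nonneg.2 (hl y hy))).1 hsum u hu
      linarith [(mul_eq_zero.1 this).resolve_left hwu]
    refine Finset.mem_convexHull'.2 ⟨w, fun y hy => hw0 y (Finset.mem_filter.1 hy).1, ?_, ?_⟩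
    · rwa [Finset.sum_filter_of_ne hzero]
    · exact Finset.sum_filter_of_ne fun u hu hwu => hzero u hu fun h => hwu (by simp [h])

theorem apply_eq_zero_of_mem_vectorSpan {s : Set E} {l : F} {c : ℝ} (hl : ∀ u ∈ s, l u = c)
    {k : E} (hk : k ∈ vectorSpan ℝ s) : l k = 0 := by
  have : vectorSpan ℝ s ≤ LinearMap.ker (l : E →ₗ[ℝ] ℝ) := by
    rw [vectorSpan_def, Submodule.span_le]
    rintro _ ⟨x, hx, y, hy, rfl⟩
    simp [hl x hx, hl y hy]
  simpa using this hk

theorem exists_mem_vectorSpan_ne_zero_apply_eq_zero {s : Set E} (hs : ¬ Collinear ℝ s)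
    (l : E →ₗ[ℝ] ℝ) : ∃ k ∈ vectorSpan ℝ s, k ≠ 0 ∧ l k = 0 := by
  by_contra! H
  have hinj : Function.Injective (l ∘ₗ (vectorSpan ℝ s).subtype) := by
    rw [← LinearMap.ker_eq_bot, eq_bot_iff]
    intro k hk
    by_contra hk0
    exact H k k.2 (by simpa using hk0) hk
  have := (l ∘ₗ (vectorSpan ℝ s).subtype).lift_rank_le_of_injective hinj
  rw [Module.rank_self, Cardinal.lift_one] at this
  exact hs (Cardinal.lift_le_one_iff.1 this)

end ConvexHull

section Exposed

variable {E : Type*} [AddCommGroup E] [Module ℝ E] [TopologicalSpace E]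

theorem isExposed_convexHull_filter {V : Finset E} {l : StrongDual ℝ E} {c : ℝ}
    (hl : ∀ u ∈ V, l u ≤ c) :
    IsExposed ℝ (convexHull ℝ ↑V) (convexHull ℝ (V.filter (l · = c) : Set E)) := by
  rintro ⟨x, hx⟩
  refine ⟨l, ?_⟩
  rw [convexHull_filter_eq hl] at hx ⊢
  ext y
  refine ⟨fun hy => ⟨hy.1, fun z hz => hy.2 ▸ apply_le_of_mem_convexHull hl hz⟩,
    fun hy => ⟨hy.1, le_antisymm (apply_le_of_mem_convexHull hl hy.1) ?_⟩⟩
  exact hx.2 ▸ hy.2 x hx.1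

theorem IsExposed.exists_eq_convexHull_filter {V : Finset E} {F : Set E}
    (hF : IsExposed ℝ (convexHull ℝ ↑V) F) (hne : F.Nonempty) :
    ∃ (l : StrongDual ℝ E) (c : ℝ), (∀ u ∈ V, l u ≤ c) ∧
      F = convexHull ℝ ↑(V.filter (l · = c)) := by
  obtain ⟨l, rfl⟩ := hF hne
  obtain ⟨x, hxV, hx⟩ := hne
  have hl : ∀ u ∈ V, l u ≤ l x := fun u hu => hx u (subset_convexHull ℝ _ hu)
  refine ⟨l, l x, hl, ?_⟩
  rw [convexHull_filter_eq hl]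
  ext y
  exact ⟨fun hy => ⟨hy.1, le_antisymm (hx y hy.1) (hy.2 x hxV)⟩,
    fun hy => ⟨hy.1, fun z hz => hy.2 ▸ hx z hz⟩⟩

/-- The outer functional plus a small multiple of the inner one exposes the inner face. -/
theorem IsExposed.trans_convexHull {V : Finset E} {F G : Set E}
    (hF : IsExposed ℝ (convexHull ℝ ↑V) F) (hG : IsExposed ℝ F G) :
    IsExposed ℝ (convexHull ℝ ↑V) G := by
  rintro hGne
  obtain ⟨ψ, M, hψ, rfl⟩ := hF.exists_eq_convexHull_filter (hGne.mono hG.subset)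
  obtain ⟨φ, m, hφ, rfl⟩ := hG.exists_eq_convexHull_filter hGne
  obtain ⟨ε, hε, hlt⟩ := exists_pos_forall_add_mul_lt V ψ φ M m
  have hχ : ∀ u ∈ V, (ψ + ε • φ) u ≤ M + ε * m ∧
      ((ψ + ε • φ) u = M + ε * m ↔ ψ u = M ∧ φ u = m) := by
    intro u hu
    simp only [add_apply, smul_apply, smul_eq_mul]
    rcases (hψ u hu).lt_or_eq with hψu | hψu
    · have := hlt u hu hψu
      exact ⟨by linarith, fun h => by linarith, fun h => absurd h.1 hψu.ne⟩
    · have hφu := hφ u (Finset.mem_filter.2 ⟨hu, hψu⟩)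
      refine ⟨by nlinarith, fun h => ⟨hψu, ?_⟩, fun h => by rw [h.1, h.2]⟩
      nlinarith
  have hfilter : (V.filter (ψ · = M)).filter (φ · = m) = V.filter ((ψ + ε • φ) · = M + ε * m) := by
    rw [Finset.filter_filter]
    exact Finset.filter_congr fun u hu => (hχ u hu).2.symm
  rw [hfilter] at hGne ⊢
  exact isExposed_convexHull_filter (fun u hu => (hχ u hu).1) hGne

end Exposed

section ImprovingEdge

variable {E : Type*} [AddCommGroup E] [Module ℝ E] [TopologicalSpace E]

theorem exists_convexHull_eq_segment_of_collinear {V : Finset E} (hV : Collinear ℝ (V : Set E))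
    {v x : E} (hv : v ∈ convexHull ℝ ↑V) {h g : StrongDual ℝ E}
    (hh : ∀ y ∈ V, y ≠ v → h y < h v) (hx : x ∈ V) (hgx : g v < g x) :
    ∃ u ∈ V, g v < g u ∧ convexHull ℝ ↑V = segment ℝ v u := by
  obtain ⟨u, huV, hu⟩ := V.exists_max_image g ⟨x, hx⟩
  have hgu : g v < g u := hgx.trans_le (hu x hx)
  have hhu : h u < h v := hh u huV fun huv => hgu.ne (huv ▸ rfl)
  refine ⟨u, huV, hgu, subset_antisymm (convexHull_min (fun y hy => ?_) (convex_segment v u))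
    ((convex_convexHull ℝ _).segment_subset hv (subset_convexHull ℝ _ huV))⟩
  have hcol : Collinear ℝ (convexHull ℝ (V : Set E)) := by
    rwa [Collinear, ← direction_affineSpan, affineSpan_convexHull, direction_affineSpan]
  obtain ⟨e, he⟩ := (collinear_iff_of_mem hv).1 hcol
  obtain ⟨r, rfl⟩ := he y (subset_convexHull ℝ _ hy)
  obtain ⟨ρ, rfl⟩ := he _ (subset_convexHull ℝ _ huV)
  have hhy : h (r • e +ᵥ v) ≤ h v := by
    rcases eq_or_ne (r • e +ᵥ v) v with hyv | hyv
    · rw [hyv]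
    · exact (hh _ hy hyv).le
  have hgy := hu _ hy
  simp only [vadd_eq_add, map_add, map_smul, smul_eq_mul] at hgu hhu hhy hgy
  -- `y = v + (r / ρ) • (u - v)`, where `0 ≤ r / ρ` since `h` peaks at `v`
  -- and `r / ρ ≤ 1` since `g` peaks at `u`
  have hρ : ρ ≠ 0 := by rintro rfl; simp at hgu
  rw [segment_eq_image']
  refine ⟨r / ρ, ⟨?_, ?_⟩, ?_⟩
  · have hhe : h e ≠ 0 := by rintro hhe; simp [hhe] at hhu
    rw [← mul_div_mul_right r ρ hhe]
    exact div_nonneg_of_nonpos (by linarith) (by linarith)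
  · have hge : g e ≠ 0 := by rintro hge; simp [hge] at hgu
    rw [← mul_div_mul_right r ρ hge, div_le_one (by linarith)]
    linarith
  · simp only [vadd_eq_add, add_sub_cancel_right, smul_smul, div_mul_cancel₀ r hρ]
    abel

theorem exists_ssubset_isExposed_of_apply_le {V : Finset E} {v u : E} {l : StrongDual ℝ E}
    (hv : v ∈ convexHull ℝ ↑V) (hl : ∀ y ∈ V, l y ≤ l v) (hnc : ∃ y ∈ V, l y ≠ l v)
    (hu : u ∈ V) (hlu : l u = l v) :
    ∃ W ⊂ V, IsExposed ℝ (convexHull ℝ ↑V) (convexHull ℝ (W : Set E)) ∧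
      v ∈ convexHull ℝ (W : Set E) ∧ u ∈ W := by
  refine ⟨V.filter (l · = l v), Finset.filter_ssubset.2 hnc, isExposed_convexHull_filter hl, ?_,
    Finset.mem_filter.2 ⟨hu, hlu⟩⟩
  rw [convexHull_filter_eq hl]
  exact ⟨hv, rfl⟩

variable [SeparatingDual ℝ E]

theorem exists_ssubset_isExposed_of_not_collinear {V : Finset E}
    (hV : ¬ Collinear ℝ (V : Set E)) {v : E} (hv : v ∈ convexHull ℝ ↑V) {h g : StrongDual ℝ E}
    (hh : ∀ y ∈ V, y ≠ v → h y < h v) (hg : ∃ x ∈ V, g v < g x) :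
    ∃ W ⊂ V, IsExposed ℝ (convexHull ℝ ↑V) (convexHull ℝ (W : Set E)) ∧
      v ∈ convexHull ℝ (W : Set E) ∧ ∃ x ∈ W, g v < g x := by
  have tilt : ∀ φ : StrongDual ℝ E, (∃ x ∈ V, φ v < φ x) → ∃ s > (0 : ℝ), ∃ u ∈ V, φ v < φ u ∧
      (s • h + φ) u = (s • h + φ) v ∧ ∀ y ∈ V, (s • h + φ) y ≤ (s • h + φ) v := by
    intro φ hφ
    simpa only [add_apply, smul_apply, smul_eq_mul] using exists_pos_mul_add_le V h φ hh hφ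
  obtain ⟨s, hs, u, huV, hgu, hχu, hχ⟩ := tilt g hg
  by_cases hnc : ∃ y ∈ V, (s • h + g) y ≠ (s • h + g) v
  · obtain ⟨W, hWV, hW, hvW, huW⟩ := exists_ssubset_isExposed_of_apply_le hv hχ hnc huV hχu
    exact ⟨W, hWV, hW, hvW, u, huW, hgu⟩
  -- `s • h + g` is constant on `V`, so every vertex other than `v` improves `g`;
  -- tilt instead towards a direction of `V` on which `h` vanishes
  push Not at hnc
  have himp : ∀ y ∈ V, y ≠ v → g v < g y := by
    intro y hy hyv
    have := hnc y hy
    simp only [add_apply, smul_apply, smul_eq_mul] at this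
    nlinarith [hh y hy hyv]
  obtain ⟨k, hk, hk0, hhk⟩ := exists_mem_vectorSpan_ne_zero_apply_eq_zero hV (h : E →ₗ[ℝ] ℝ)
  obtain ⟨φ, hφk⟩ := SeparatingDual.exists_ne_zero (R := ℝ) hk0
  obtain ⟨ψ, hψk, hψ⟩ : ∃ ψ : StrongDual ℝ E, ψ k ≠ 0 ∧ ∃ x ∈ V, ψ v < ψ x := by
    by_cases hφ : ∃ x ∈ V, φ v < φ x
    · exact ⟨φ, hφk, hφ⟩
    refine ⟨-φ, by simpa using hφk, ?_⟩
    by_contra hφ'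
    push Not at hφ hφ'
    exact hφk (apply_eq_zero_of_mem_vectorSpan
      (fun x hx => le_antisymm (hφ x hx) (by simpa using hφ' x hx)) hk)
  obtain ⟨s', hs', u', hu'V, hψu', hχu', hχ'⟩ := tilt ψ hψ
  have hnc' : ∃ y ∈ V, (s' • h + ψ) y ≠ (s' • h + ψ) v := by
    by_contra! H
    apply hψk
    simpa [show h k = 0 from hhk] using apply_eq_zero_of_mem_vectorSpan H hk
  obtain ⟨W, hWV, hW, hvW, hu'W⟩ := exists_ssubset_isExposed_of_apply_le hv hχ' hnc' hu'V hχu'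
  exact ⟨W, hWV, hW, hvW, u', hu'W, himp u' hu'V fun h => hψu'.ne (h ▸ rfl)⟩

theorem exists_lt_isExposed_segment (V : Finset E) {v : E} {h g : StrongDual ℝ E}
    (hv : v ∈ convexHull ℝ ↑V) (hh : ∀ y ∈ V, y ≠ v → h y < h v) (hg : ∃ x ∈ V, g v < g x) :
    ∃ u ∈ V, g v < g u ∧ IsExposed ℝ (convexHull ℝ ↑V) (segment ℝ v u) := by
  induction V using Finset.strongInduction with
  | H V ih =>
    by_cases hV : Collinear ℝ (V : Set E)
    · obtain ⟨x, hx, hgx⟩ := hg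
      obtain ⟨u, huV, hgu, hVu⟩ := exists_convexHull_eq_segment_of_collinear hV hv hh hx hgx
      exact ⟨u, huV, hgu, hVu ▸ IsExposed.refl _⟩
    obtain ⟨W, hWV, hW, hvW, hgW⟩ := exists_ssubset_isExposed_of_not_collinear hV hv hh hg
    obtain ⟨u, huW, hgu, hu⟩ := ih W hWV hvW (fun y hy => hh y (hWV.subset hy)) hgW
    exact ⟨u, hWV.subset huW, hgu, hW.trans_convexHull hu⟩

theorem subset_of_forall_isExposed_segment {V : Finset E} {F G : Set E} {v : E}
    (hv : v ∈ (convexHull ℝ (V : Set E)).exposedPoints ℝ)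
    (hF : IsExposed ℝ (convexHull ℝ ↑V) F) (hvF : v ∈ F)
    (hG : IsExposed ℝ (convexHull ℝ ↑V) G) (hvG : v ∈ G)
    (hFG : ∀ u ∈ F, u ≠ v → IsExposed ℝ (convexHull ℝ ↑V) (segment ℝ v u) → u ∈ G) :
    F ⊆ G := by
  obtain ⟨-, h, hh⟩ := hv
  have hstrict : ∀ y ∈ convexHull ℝ (V : Set E), y ≠ v → h y < h v := fun y hy hyv =>
    lt_of_le_of_ne (hh y hy).1 fun hyv' => hyv ((hh y hy).2 hyv'.ge)
  obtain ⟨ψ, M, -, rfl⟩ := hF.exists_eq_convexHull_filter ⟨v, hvF⟩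
  obtain ⟨f, rfl⟩ := hG ⟨v, hvG⟩
  have hWV : convexHull ℝ (V.filter (ψ · = M) : Set E) ⊆ convexHull ℝ ↑V :=
    convexHull_mono (Finset.coe_subset.2 (Finset.filter_subset _ V))
  intro x hxF
  by_contra hxG
  have hfx : f x < f v := by
    by_contra! hfx
    exact hxG ⟨hWV hxF, fun y hy => (hvG.2 y hy).trans hfx⟩
  have hdesc : ∃ y ∈ V.filter (ψ · = M), (-f) v < (-f) y := by
    by_contra! H
    exact hfx.not_ge (by simpa using apply_le_of_mem_convexHull (l := -f) H hxF)
  obtain ⟨u, huW, hfu, hseg⟩ := exists_lt_isExposed_segment _ hvF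
    (fun y hy => hstrict y (hWV (subset_convexHull ℝ _ hy))) hdesc
  have huG := hFG u (subset_convexHull ℝ _ huW) (fun huv => hfu.ne (huv ▸ rfl))
    (hF.trans_convexHull hseg)
  simp only [neg_apply, neg_lt_neg_iff] at hfu
  exact hfu.not_ge (huG.2 v hvG.1)

end ImprovingEdge

section Polytope

variable {n : ℕ} {P : Set (EVec n)}

theorem IsFace.isExposed {F : Set (EVec n)} (hF : IsFace P F) : IsExposed ℝ P F := by
  rcases hF with hF | rfl | rfl
  · exact hF
  · exact isExposed_empty
  · exact IsExposed.refl _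

theorem IsFace.inter {F G : Set (EVec n)} (hF : IsFace P F) (hG : IsFace P G) :
    IsFace P (F ∩ G) :=
  Or.inl (hF.isExposed.inter hG.isExposed)

theorem IsVertex.mem_exposedPoints {v : EVec n} (hv : IsVertex P v) : v ∈ P.exposedPoints ℝ :=
  mem_exposedPoints_iff_exposed_singleton.2 hv.1.isExposed

theorem sdim_convexHull_pair {v u : EVec n} (h : u ≠ v) :
    sdim (convexHull ℝ ({v, u} : Set (EVec n))) = 1 := by
  rw [sdim, affineSpan_convexHull, direction_affineSpan, vectorSpan_pair]
  exact finrank_span_singleton (sub_ne_zero.2 h.symm)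

theorem adj_of_isExposed_segment {v u : EVec n} (hu : u ≠ v)
    (h : IsExposed ℝ P (segment ℝ v u)) : Adj P v u :=
  ⟨Or.inl (by rwa [convexHull_pair]), ⟨v, subset_convexHull ℝ _ (Set.mem_insert v _)⟩,
    sdim_convexHull_pair hu⟩

theorem Spans.mem_of_adj {v u : EVec n} {S F : Set (EVec n)} (hF : Spans P v S F)
    (hu : Adj P v u) (huF : u ∈ F) : u ∈ S := by
  by_contra huS
  exact hF.2.2.2 u ⟨hu, huS⟩ huF

theorem Spans.mem_iff {v w u : EVec n} {T F : Set (EVec n)} (hF : Spans P w (insert v T) F)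
    (hT : T ⊆ Neighbors P w \ {v}) : u ∈ T ↔ u ∈ Neighbors P w \ {v} ∧ u ∈ F := by
  refine ⟨fun hu => ⟨hT hu, hF.2.2.1 (Set.mem_insert_of_mem v hu)⟩, fun ⟨⟨hwu, huv⟩, huF⟩ => ?_⟩
  exact (Set.mem_insert_iff.1 (hF.mem_of_adj hwu huF)).resolve_left huv

theorem subset_of_spans (hP : IsPolytope P) {v : EVec n} (hv : IsVertex P v)
    {F G S : Set (EVec n)} (hF : IsFace P F) (hvF : v ∈ F) (hG : Spans P v S G)
    (hFS : ∀ u ∈ F, Adj P v u → u ∈ S) : F ⊆ G := by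
  obtain ⟨V, rfl⟩ := hP
  exact subset_of_forall_isExposed_segment hv.mem_exposedPoints hF.isExposed hvF
    hG.1.1.isExposed hG.2.1 fun u huF huv hseg =>
      hG.2.2.1 (hFS u huF (adj_of_isExposed_segment huv hseg))

end Polytope

theorem stmt2_general {n d : ℕ} (P : Set (EVec n)) (hP : IsSimplePolytope P d)
    (v w : EVec n) (hv : IsVertex P v)
    (Ψ : Set (EVec n) → Set (EVec n))
    (hΨ : ∀ S : Set (EVec n), S ⊆ Neighbors P v \ {w} →
        Ψ S ⊆ Neighbors P w \ {v} ∧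
          ∃ F : Set (EVec n), Spans P v (insert w S) F ∧ Spans P w (insert v (Ψ S)) F)
    (S₁ S₂ : Set (EVec n)) (h₁ : S₁ ⊆ Neighbors P v \ {w})
    (h₂ : S₂ ⊆ Neighbors P v \ {w}) :
    Ψ (S₁ ∩ S₂) = Ψ S₁ ∩ Ψ S₂ := by
  obtain ⟨hΨ₀, F₀, hv₀, hw₀⟩ := hΨ (S₁ ∩ S₂) (Set.inter_subset_left.trans h₁)
  obtain ⟨hΨ₁, F₁, hv₁, hw₁⟩ := hΨ S₁ h₁
  obtain ⟨hΨ₂, F₂, hv₂, hw₂⟩ := hΨ S₂ h₂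
  have hF : F₀ = F₁ ∩ F₂ := by
    refine subset_antisymm (Set.subset_inter ?_ ?_) ?_
    · exact subset_of_spans hP.1 hv hv₀.1.1 hv₀.2.1 hv₁ fun u hu hvu =>
        Set.insert_subset_insert Set.inter_subset_left (hv₀.mem_of_adj hvu hu)
    · exact subset_of_spans hP.1 hv hv₀.1.1 hv₀.2.1 hv₂ fun u hu hvu =>
        Set.insert_subset_insert Set.inter_subset_right (hv₀.mem_of_adj hvu hu)
    · refine subset_of_spans hP.1 hv (hv₁.1.1.inter hv₂.1.1) ⟨hv₁.2.1, hv₂.2.1⟩ hv₀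
        fun u hu hvu => ?_
      rw [Set.insert_inter_distrib]
      exact ⟨hv₁.mem_of_adj hvu hu.1, hv₂.mem_of_adj hvu hu.2⟩
  ext u
  rw [Set.mem_inter_iff, hw₀.mem_iff hΨ₀, hw₁.mem_iff hΨ₁, hw₂.mem_iff hΨ₂, hF,
    Set.mem_inter_iff]
  tauto

/-- `Ψ_{(v,w)}(S₁ ∩ S₂) = Ψ_{(v,w)}(S₁) ∩ Ψ_{(v,w)}(S₂)`. -/
theorem stmt2 {n d : ℕ} (P : Set (EVec n)) (hP : IsSimplePolytope P d)
    (v w : EVec n) (hv : IsVertex P v) (hw : IsVertex P w) (hvw : Adj P v w)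
    (Ψ : Set (EVec n) → Set (EVec n))
    (hΨ : ∀ S : Set (EVec n), S ⊆ Neighbors P v \ {w} →
        Ψ S ⊆ Neighbors P w \ {v} ∧
          ∃ F : Set (EVec n), Spans P v (insert w S) F ∧ Spans P w (insert v (Ψ S)) F)
    (S₁ S₂ : Set (EVec n)) (h₁ : S₁ ⊆ Neighbors P v \ {w})
    (h₂ : S₂ ⊆ Neighbors P v \ {w}) :
    Ψ (S₁ ∩ S₂) = Ψ S₁ ∩ Ψ S₂ :=
  stmt2_general P hP v w hv Ψ hΨ S₁ S₂ h₁ h₂
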